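/- (Location of the first zero of a pendent channel) Let κ < 0 and let u be a solution of the capillary equation on [0, R] with u(0) = u₀, u'(0) = 0, where −√(−2/κ) < u₀ < 0. Assume R > 0 is the first zero of u, i.e. u(R) = 0 and u(r) < 0 for all r ∈ [0, R). Then 1/√(−2κ) < R < √(−2e/κ), where e is Euler's number. -/

import Mathlib

/-!
With `ψ = arctan u'` the capillary equation becomes `(sin ψ)' = κ u`, and `(cos ψ)' = -κ u u'`
gives the first integral `cos ψ + κ u² / 2 = 1 + κ u₀² / 2`. As `κ u > 0` before the first zero,
`u'` increases from `0`, so `u₀ < u < 0` and `u' > 0` on `(0, R)`.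

Lower bound: `sin ψ(R) ≤ κ u₀ R`, while at `R` the first integral gives `cos ψ(R) = 1 - B` with
`B = -κ u₀² / 2 ∈ (0, 1)`, hence `sin² ψ(R) = B (2 - B) > B`.

Upper bound: `u'² ≥ sin² ψ ≥ 1 - cos ψ = -κ (u₀² - u²) / 2`, so `arcsin (u / |u₀|)` grows at
rate at least `√(-κ/2)` while climbing from `-π/2` to `0`. Thus `R ≤ π / √(-2κ)`, and
`π² < 4e` finishes.
-/

open Real Set

theorem rpow_three_halves_eq_mul_sqrt {a : ℝ} (ha : 0 ≤ a) : a ^ ((3 : ℝ) / 2) = a * √a := by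
  rw [show (3 : ℝ) / 2 = 1 + 1 / 2 by norm_num, rpow_add' ha (by norm_num), rpow_one,
    sqrt_eq_rpow]

namespace Real

theorem one_sub_cos_le_sin_sq {x : ℝ} (h : 0 ≤ cos x) : 1 - cos x ≤ sin x ^ 2 := by
  nlinarith [sin_sq_add_cos_sq x, cos_le_one x]

theorem one_sub_cos_lt_sin_sq {x : ℝ} (h₀ : 0 < cos x) (h₁ : cos x < 1) :
    1 - cos x < sin x ^ 2 := by
  nlinarith [sin_sq_add_cos_sq x]

theorem sin_sq_arctan_le (x : ℝ) : sin (arctan x) ^ 2 ≤ x ^ 2 := by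
  rw [sin_sq_arctan]
  exact div_le_self (sq_nonneg x) (by nlinarith [sq_nonneg x])

end Real

theorem HasDerivAt.arcsin_div {f : ℝ → ℝ} {f' x m : ℝ} (hf : HasDerivAt f f' x) (hm : 0 < m)
    (hfx : |f x| < m) :
    HasDerivAt (fun y => arcsin (f y / m)) (f' / √(m ^ 2 - f x ^ 2)) x := by
  obtain ⟨hlo, hhi⟩ := abs_lt.mp hfx
  have h₁ : f x / m ≠ -1 := by
    rw [Ne, div_eq_iff hm.ne']
    linarith
  have h₂ : f x / m ≠ 1 := by
    rw [Ne, div_eq_iff hm.ne']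
    linarith
  have hsqrt : √(m ^ 2 - f x ^ 2) = m * √(1 - (f x / m) ^ 2) := by
    rw [← sqrt_sq hm.le, ← sqrt_mul (sq_nonneg m), sqrt_sq hm.le]
    congr 1
    field_simp
  refine ((hasDerivAt_arcsin h₁ h₂).comp x (hf.div_const m)).congr_deriv ?_
  rw [hsqrt]
  field_simp

structure IsCapillarySolution (κ R : ℝ) (u : ℝ → ℝ) : Prop where
  differentiable : Differentiable ℝ u
  differentiable_deriv : Differentiable ℝ (deriv u)
  ode : ∀ r ∈ Icc 0 R, deriv (deriv u) r = κ * u r * (1 + deriv u r ^ 2) ^ ((3 : ℝ) / 2)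

/-- The paper's inclination angle `ψ`, defined there by `sin ψ = u' / √(1 + u'²)`. -/
noncomputable def inclination (u : ℝ → ℝ) (r : ℝ) : ℝ := arctan (deriv u r)

namespace IsCapillarySolution

variable {κ R : ℝ} {u : ℝ → ℝ}

theorem continuous_inclination (hs : IsCapillarySolution κ R u) :
    Continuous (inclination u) :=
  continuous_arctan.comp hs.differentiable_deriv.continuous

theorem hasDerivAt_inclination (hs : IsCapillarySolution κ R u) {r : ℝ} (hr : r ∈ Icc 0 R) :
    HasDerivAt (inclination u) (κ * u r * √(1 + deriv u r ^ 2)) r := by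
  have hq : 0 < 1 + deriv u r ^ 2 := by positivity
  refine (hs.differentiable_deriv r).hasDerivAt.arctan.congr_deriv ?_
  rw [hs.ode r hr, rpow_three_halves_eq_mul_sqrt hq.le]
  field_simp

theorem hasDerivAt_sin_inclination (hs : IsCapillarySolution κ R u) {r : ℝ}
    (hr : r ∈ Icc 0 R) : HasDerivAt (fun x => sin (inclination u x)) (κ * u r) r := by
  convert (hs.hasDerivAt_inclination hr).sin using 1
  rw [inclination, cos_arctan]
  field_simp

theorem hasDerivAt_cos_inclination (hs : IsCapillarySolution κ R u) {r : ℝ}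
    (hr : r ∈ Icc 0 R) :
    HasDerivAt (fun x => cos (inclination u x)) (-(κ * u r * deriv u r)) r := by
  convert (hs.hasDerivAt_inclination hr).cos using 1
  rw [inclination, sin_arctan]
  field_simp

theorem cos_inclination_add_eq (hs : IsCapillarySolution κ R u) :
    ∀ r ∈ Icc 0 R,
      cos (inclination u r) + κ / 2 * u r ^ 2 = cos (inclination u 0) + κ / 2 * u 0 ^ 2 := by
  have hcont : Continuous fun x => cos (inclination u x) + κ / 2 * u x ^ 2 :=
    (continuous_cos.comp hs.continuous_inclination).add
      (continuous_const.mul (hs.differentiable.continuous.pow 2))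
  refine constant_of_has_deriv_right_zero hcont.continuousOn fun r hr => ?_
  have h := (hs.hasDerivAt_cos_inclination (Ico_subset_Icc_self hr)).fun_add
    (((hs.differentiable r).hasDerivAt.fun_pow 2).const_mul (κ / 2))
  refine (h.congr_deriv ?_).hasDerivWithinAt
  push_cast
  ring

theorem cos_inclination_eq (hs : IsCapillarySolution κ R u) (hdu0 : deriv u 0 = 0) :
    ∀ r ∈ Icc 0 R, cos (inclination u r) = 1 + κ / 2 * (u 0 ^ 2 - u r ^ 2) := by
  intro r hr
  have h₀ : cos (inclination u 0) = 1 := by simp [inclination, hdu0]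
  linarith [hs.cos_inclination_add_eq r hr]

theorem neg_half_mul_le_deriv_sq (hs : IsCapillarySolution κ R u) (hdu0 : deriv u 0 = 0) :
    ∀ r ∈ Icc 0 R, -κ / 2 * (u 0 ^ 2 - u r ^ 2) ≤ deriv u r ^ 2 := by
  intro r hr
  have h := one_sub_cos_le_sin_sq (cos_arctan_pos (deriv u r)).le
  have hsin := sin_sq_arctan_le (deriv u r)
  rw [← inclination, hs.cos_inclination_eq hdu0 r hr] at h
  rw [← inclination] at hsin
  linarith

theorem deriv_pos (hs : IsCapillarySolution κ R u) (hκ : κ < 0) (hdu0 : deriv u 0 = 0)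
    (hneg : ∀ r ∈ Ico 0 R, u r < 0) : ∀ r ∈ Ioc 0 R, 0 < deriv u r := by
  have hmono : StrictMonoOn (deriv u) (Icc 0 R) := by
    refine strictMonoOn_of_deriv_pos (convex_Icc 0 R)
      hs.differentiable_deriv.continuous.continuousOn fun x hx => ?_
    rw [interior_Icc] at hx
    rw [hs.ode x (Ioo_subset_Icc_self hx)]
    exact mul_pos (mul_pos_of_neg_of_neg hκ (hneg x (Ioo_subset_Ico_self hx))) (by positivity)
  intro r hr
  simpa [hdu0] using hmono (left_mem_Icc.2 (hr.1.le.trans hr.2)) (Ioc_subset_Icc_self hr) hr.1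

theorem apply_zero_lt (hs : IsCapillarySolution κ R u) (hκ : κ < 0) (hdu0 : deriv u 0 = 0)
    (hneg : ∀ r ∈ Ico 0 R, u r < 0) : ∀ r ∈ Ioc 0 R, u 0 < u r := by
  have hmono : StrictMonoOn u (Icc 0 R) := by
    refine strictMonoOn_of_deriv_pos (convex_Icc 0 R)
      hs.differentiable.continuous.continuousOn fun x hx => ?_
    rw [interior_Icc] at hx
    exact hs.deriv_pos hκ hdu0 hneg x (Ioo_subset_Ioc_self hx)
  intro r hr
  exact hmono (left_mem_Icc.2 (hr.1.le.trans hr.2)) (Ioc_subset_Icc_self hr) hr.1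

theorem sin_inclination_le (hs : IsCapillarySolution κ R u) (hκ : κ < 0) (hR : 0 ≤ R)
    (hdu0 : deriv u 0 = 0) (hneg : ∀ r ∈ Ico 0 R, u r < 0) :
    sin (inclination u R) ≤ κ * u 0 * R := by
  have hsin_diff : Differentiable ℝ fun x => sin (inclination u x) := fun x =>
    (differentiableAt_arctan _).comp x (hs.differentiable_deriv x) |>.sin
  have h := (convex_Icc 0 R).image_sub_le_mul_sub_of_deriv_le hsin_diff.continuous.continuousOn
    hsin_diff.differentiableOn (C := κ * u 0) (fun x hx => ?_) 0 (left_mem_Icc.2 hR) R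
    (right_mem_Icc.2 hR) hR
  · simpa [inclination, hdu0] using h
  rw [interior_Icc] at hx
  rw [(hs.hasDerivAt_sin_inclination (Ioo_subset_Icc_self hx)).deriv]
  exact mul_le_mul_of_nonpos_left (hs.apply_zero_lt hκ hdu0 hneg x (Ioo_subset_Ioc_self hx)).le
    hκ.le

theorem one_div_sqrt_neg_two_mul_lt (hs : IsCapillarySolution κ R u) (hκ : κ < 0) (hR : 0 < R)
    (hdu0 : deriv u 0 = 0) (hzero : u R = 0) (hneg : ∀ r ∈ Ico 0 R, u r < 0) :
    1 / √(-2 * κ) < R := by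
  have hu0 : u 0 < 0 := hneg 0 ⟨le_rfl, hR⟩
  have hB : 0 < -κ * u 0 ^ 2 := mul_pos (neg_pos.2 hκ) (by nlinarith)
  have hcos : cos (inclination u R) = 1 + κ / 2 * u 0 ^ 2 := by
    simpa [hzero] using hs.cos_inclination_eq hdu0 R (right_mem_Icc.2 hR.le)
  have hsin_nonneg : 0 ≤ sin (inclination u R) :=
    sin_arctan_nonneg.2 (hs.deriv_pos hκ hdu0 hneg R (right_mem_Ioc.2 hR)).le
  have hsin_sq : sin (inclination u R) ^ 2 ≤ (κ * u 0 * R) ^ 2 :=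
    pow_le_pow_left₀ hsin_nonneg (hs.sin_inclination_le hκ hR.le hdu0 hneg) 2
  have hlt := one_sub_cos_lt_sin_sq (cos_arctan_pos (deriv u R))
    (by rw [← inclination, hcos]; linarith)
  rw [← inclination, hcos] at hlt
  have key : 1 < R ^ 2 * (-2 * κ) := by nlinarith
  rw [div_lt_iff₀ (sqrt_pos.2 (by linarith)), ← sqrt_sq hR.le, ← sqrt_mul (sq_nonneg R),
    lt_sqrt zero_le_one]
  simpa using key

theorem sqrt_neg_half_mul_le_pi_div_two (hs : IsCapillarySolution κ R u) (hκ : κ < 0)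
    (hR : 0 < R) (hdu0 : deriv u 0 = 0) (hzero : u R = 0) (hneg : ∀ r ∈ Ico 0 R, u r < 0) :
    √(-κ / 2) * R ≤ π / 2 := by
  have hu0 : u 0 < 0 := hneg 0 ⟨le_rfl, hR⟩
  have hm : 0 < -u 0 := neg_pos.2 hu0
  have hderiv : ∀ x ∈ Ioo 0 R, HasDerivAt (fun y => arcsin (u y / -u 0))
      (deriv u x / √((-u 0) ^ 2 - u x ^ 2)) x := fun x hx =>
    (hs.differentiable x).hasDerivAt.arcsin_div hm <| abs_lt.2
      ⟨by linarith [hs.apply_zero_lt hκ hdu0 hneg x (Ioo_subset_Ioc_self hx)],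
        by linarith [hneg x (Ioo_subset_Ico_self hx)]⟩
  have hcont : Continuous fun y => arcsin (u y / -u 0) :=
    continuous_arcsin.comp (hs.differentiable.continuous.div_const _)
  have h := (convex_Icc 0 R).mul_sub_le_image_sub_of_le_deriv hcont.continuousOn
    (fun x hx => (hderiv x (by rwa [interior_Icc] at hx)).differentiableAt.differentiableWithinAt)
    (C := √(-κ / 2)) (fun x hx => ?_) 0 (left_mem_Icc.2 hR.le) R (right_mem_Icc.2 hR.le) hR.le
  · simpa [hzero, div_neg, div_self hu0.ne] using h
  rw [interior_Icc] at hx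
  have hgap : 0 < (-u 0) ^ 2 - u x ^ 2 := by
    nlinarith [hs.apply_zero_lt hκ hdu0 hneg x (Ioo_subset_Ioc_self hx),
      hneg x (Ioo_subset_Ico_self hx)]
  rw [(hderiv x hx).deriv, le_div_iff₀ (sqrt_pos.2 hgap), ← sqrt_mul (by linarith),
    sqrt_le_left (hs.deriv_pos hκ hdu0 hneg x (Ioo_subset_Ioc_self hx)).le]
  simpa using hs.neg_half_mul_le_deriv_sq hdu0 x (Ioo_subset_Icc_self hx)

end IsCapillarySolution

theorem lt_sqrt_neg_two_mul_exp_one_div {κ R : ℝ} (hκ : κ < 0) (hR : 0 ≤ R)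
    (h : √(-κ / 2) * R ≤ π / 2) : R < √(-2 * exp 1 / κ) := by
  have hsq := pow_le_pow_left₀ (by positivity) h 2
  rw [mul_pow, sq_sqrt (by linarith)] at hsq
  rw [lt_sqrt hR, lt_div_iff_of_neg hκ]
  nlinarith [pi_lt_d2, exp_one_gt_d9, pi_pos]

theorem stmt_19_general (κ R : ℝ) (hκ : κ < 0) (hR : 0 < R) (u : ℝ → ℝ)
    (hu : Differentiable ℝ u) (hu' : Differentiable ℝ (deriv u))
    (hode : ∀ r ∈ Set.Icc (0 : ℝ) R,
      deriv (deriv u) r = κ * u r * (1 + (deriv u r) ^ 2) ^ ((3 : ℝ) / 2))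
    (hdu0 : deriv u 0 = 0)
    (hzero : u R = 0) (hneg : ∀ r ∈ Set.Ico (0 : ℝ) R, u r < 0) :
    1 / Real.sqrt (-2 * κ) < R ∧
    R < Real.sqrt (-2 * Real.exp 1 / κ) := by
  have hs : IsCapillarySolution κ R u := ⟨hu, hu', hode⟩
  exact ⟨hs.one_div_sqrt_neg_two_mul_lt hκ hR hdu0 hzero hneg,
    lt_sqrt_neg_two_mul_exp_one_div hκ hR.le
      (hs.sqrt_neg_half_mul_le_pi_div_two hκ hR hdu0 hzero hneg)⟩

/-- Location of the first zero of a pendent channel: for κ < 0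
and −√(−2/κ) < u₀ < 0, if R is the first zero of u then
1/√(−2κ) < R < √(−2e/κ). -/
theorem stmt_19 (κ R u₀ : ℝ) (hκ : κ < 0) (hR : 0 < R) (u : ℝ → ℝ)
    (hu : Differentiable ℝ u) (hu' : Differentiable ℝ (deriv u))
    (hode : ∀ r ∈ Set.Icc (0 : ℝ) R,
      deriv (deriv u) r = κ * u r * (1 + (deriv u r) ^ 2) ^ ((3 : ℝ) / 2))
    (hu0 : u 0 = u₀) (hdu0 : deriv u 0 = 0)
    (hu₀l : -Real.sqrt (-2 / κ) < u₀) (hu₀u : u₀ < 0)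
    (hzero : u R = 0) (hneg : ∀ r ∈ Set.Ico (0 : ℝ) R, u r < 0) :
    1 / Real.sqrt (-2 * κ) < R ∧
    R < Real.sqrt (-2 * Real.exp 1 / κ) :=
  stmt_19_general κ R hκ hR u hu hu' hode hdu0 hzero hneg
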